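/- arXiv:2410.12421 — 3 statements merged into one kernel-verified Lean document; each statement's English description precedes it below -/
import Mathlib

section
/- Let A = [[W, −X],[X, W]] with W symmetric and X skew-symmetric (both m×m). Then there exist an orthogonal symplectic matrix Q ∈ ℝ^{2m×2m} (i.e., Q orthogonal with Q J Qᵀ = J, J = [[0,−I],[I,0]]) and a diagonal matrix Λ ∈ ℝ^{m×m} such that A = Q diag(Λ, Λ) Qᵀ. -/
open Matrix

namespace WXaux

variable {m : ℕ}

/-- Realification of a complex matrix. -/
noncomputable def phi (M : Matrix (Fin m) (Fin m) ℂ) :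
    Matrix (Fin m ⊕ Fin m) (Fin m ⊕ Fin m) ℝ :=
  fromBlocks (M.map Complex.re) (-(M.map Complex.im)) (M.map Complex.im) (M.map Complex.re)

lemma map_re_mul (M N : Matrix (Fin m) (Fin m) ℂ) :
    (M * N).map Complex.re =
      M.map Complex.re * N.map Complex.re - M.map Complex.im * N.map Complex.im := by
  ext i j
  simp [Matrix.mul_apply, Complex.mul_re, Finset.sum_sub_distrib]

lemma map_im_mul (M N : Matrix (Fin m) (Fin m) ℂ) :
    (M * N).map Complex.im =
      M.map Complex.re * N.map Complex.im + M.map Complex.im * N.map Complex.re := by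
  ext i j
  simp [Matrix.mul_apply, Complex.mul_im, Finset.sum_add_distrib]

lemma phi_mul (M N : Matrix (Fin m) (Fin m) ℂ) : phi (M * N) = phi M * phi N := by
  simp only [phi, fromBlocks_multiply, map_re_mul, map_im_mul]
  have h : ∀ (A B C D A' B' C' D' : Matrix (Fin m) (Fin m) ℝ), A = A' → B = B' → C = C' →
      D = D' → fromBlocks A B C D = fromBlocks A' B' C' D' := by
    rintro A B C D _ _ _ _ rfl rfl rfl rfl; rfl
  apply h <;> first | noncomm_ring | abel

lemma phi_one : phi (1 : Matrix (Fin m) (Fin m) ℂ) = 1 := by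
  have h1 : (1 : Matrix (Fin m) (Fin m) ℂ).map Complex.re = 1 := by
    ext i j; simp [Matrix.one_apply]; split <;> simp
  have h2 : (1 : Matrix (Fin m) (Fin m) ℂ).map Complex.im = 0 := by
    ext i j; simp [Matrix.one_apply]; split <;> simp
  simp [phi, h1, h2, ← fromBlocks_one]

lemma phi_conjTranspose (M : Matrix (Fin m) (Fin m) ℂ) : phi Mᴴ = (phi M)ᵀ := by
  have h1 : Mᴴ.map Complex.re = (M.map Complex.re)ᵀ := by
    ext i j; simp [Matrix.conjTranspose_apply]
  have h2 : Mᴴ.map Complex.im = -((M.map Complex.im)ᵀ) := by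
    ext i j; simp [Matrix.conjTranspose_apply]
  simp [phi, h1, h2, fromBlocks_transpose]

lemma phi_i : phi ((Complex.I : ℂ) • (1 : Matrix (Fin m) (Fin m) ℂ)) =
    fromBlocks 0 (-1) 1 0 := by
  have h1 : ((Complex.I : ℂ) • (1 : Matrix (Fin m) (Fin m) ℂ)).map Complex.re = 0 := by
    ext i j; simp [Matrix.one_apply]; split <;> simp
  have h2 : ((Complex.I : ℂ) • (1 : Matrix (Fin m) (Fin m) ℂ)).map Complex.im = 1 := by
    ext i j; simp [Matrix.one_apply]; split <;> simp [Matrix.one_apply]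
  simp [phi, h1, h2]

lemma phi_diag (lam : Fin m → ℝ) :
    phi (diagonal ((Complex.ofReal) ∘ lam)) = fromBlocks (diagonal lam) 0 0 (diagonal lam) := by
  have h1 : (diagonal ((Complex.ofReal) ∘ lam)).map Complex.re = diagonal lam := by
    ext i j; simp [Matrix.diagonal_apply]; split <;> simp
  have h2 : (diagonal ((Complex.ofReal) ∘ lam)).map Complex.im = 0 := by
    ext i j; simp [Matrix.diagonal_apply]; split <;> simp
  simp [phi, h1, h2]

end WXaux

open WXaux in
theorem WX_symplectic_diagonalizable {m : ℕ}
    (W X : Matrix (Fin m) (Fin m) ℝ) (hW : Wᵀ = W) (hX : Xᵀ = -X) :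
    ∃ (Q : Matrix (Fin m ⊕ Fin m) (Fin m ⊕ Fin m) ℝ) (lam : Fin m → ℝ),
      Qᵀ * Q = 1 ∧ Q * Qᵀ = 1 ∧
      Q * fromBlocks 0 (-1) 1 0 * Qᵀ = fromBlocks 0 (-1) 1 0 ∧
      fromBlocks W (-X) X W =
        Q * fromBlocks (diagonal lam) 0 0 (diagonal lam) * Qᵀ := by
  -- the Hermitian matrix W + iX
  set H : Matrix (Fin m) (Fin m) ℂ :=
    fun i j => (W i j : ℂ) + (X i j : ℂ) * Complex.I with hHdef
  have hH : H.IsHermitian := by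
    ext i j
    have hw : W j i = W i j := by
      conv_lhs => rw [← hW]
      rfl
    have hx : X j i = -X i j := by
      have := congrFun (congrFun hX i) j
      simpa [Matrix.transpose_apply] using this
    rw [Matrix.conjTranspose_apply]
    simp [hHdef, Matrix.conjTranspose_apply, hw, hx, Complex.ext_iff]
  obtain ⟨U, hUmem⟩ := hH.eigenvectorUnitary
  have hspec := hH.spectral_theorem
  set lam := hH.eigenvalues with hlam
  -- the unitary matrix
  set Uc : Matrix (Fin m) (Fin m) ℂ := (hH.eigenvectorUnitary : Matrix (Fin m) (Fin m) ℂ)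
    with hUc
  have hU1 : Ucᴴ * Uc = 1 := by
    simpa [Uc, star_eq_conjTranspose] using
      (Unitary.star_mul_self_of_mem (hH.eigenvectorUnitary).2)
  have hU2 : Uc * Ucᴴ = 1 := by
    simpa [Uc, star_eq_conjTranspose] using
      (Unitary.mul_star_self_of_mem (hH.eigenvectorUnitary).2)
  refine ⟨phi Uc, lam, ?_, ?_, ?_, ?_⟩
  · rw [← phi_conjTranspose, ← phi_mul, hU1, phi_one]
  · rw [← phi_conjTranspose, ← phi_mul, hU2, phi_one]
  · rw [← phi_i, ← phi_conjTranspose, ← phi_mul, ← phi_mul]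
    rw [Matrix.mul_smul, mul_one, Matrix.smul_mul, hU2]
  · have hA : fromBlocks W (-X) X W = phi H := by
      have h1 : H.map Complex.re = W := by ext i j; rw [Matrix.map_apply]; simp [hHdef]
      have h2 : H.map Complex.im = X := by ext i j; rw [Matrix.map_apply]; simp [hHdef]
      simp [phi, h1, h2]
    have : H = Uc * diagonal ((Complex.ofReal) ∘ lam) * Ucᴴ := by
      simpa [Uc, star_eq_conjTranspose, hlam] using hspec
    rw [hA, this, phi_mul, phi_mul, phi_conjTranspose, phi_diag]
end

section
/- Let A ∈ ℝ^{n×n} be normal with real Schur decomposition A = Q S Qᵀ, where S = [[Λ cos Θ, 0, −Λ sin Θ],[0, Λ̆, 0],[Λ sin Θ, 0, Λ cos Θ]], with all diagonal entries of Λ sin Θ nonzero. If V ∈ ℝ^{n×r} has orthonormal columns and skew(A) V = 0, then there exists an orthogonal matrix R̆ ∈ O(r) such that A (V R̆) = (V R̆) Λ̆. -/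
/-!
In the coordinates `W = Qᵀ V` the kernel condition reads `(S - Sᵀ) W = 0`, and `S - Sᵀ` only
couples the first and last blocks, through the invertible `2 Λ sin Θ`. Hence `W` is supported on
the middle block `B`, which is orthogonal because `W` has orthonormal columns, and `R̆ = Bᵀ` makes
`W R̆` the inclusion of the middle block, on which `S` acts as `Λ̆`.
-/

open Matrix

namespace Matrix

variable {R : Type*} {m n k : Type*}

/-- The paper's `S`, with `c = Λ cos Θ`, `s = Λ sin Θ` and `d = Λ̆`. -/
def normalSchurForm [Zero R] [Neg R] (c s : Matrix m m R) (d : Matrix n n R) :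
    Matrix ((m ⊕ n) ⊕ m) ((m ⊕ n) ⊕ m) R :=
  fromBlocks (fromBlocks c 0 0 d) (fromRows (-s) 0) (fromCols s 0) c

section Ring

variable [Ring R]

theorem normalSchurForm_sub_transpose (c s : Matrix m m R) (d : Matrix n n R) :
    normalSchurForm c s d - (normalSchurForm c s d)ᵀ =
      normalSchurForm (c - cᵀ) (s + sᵀ) (d - dᵀ) := by
  ext ((i | i) | i) ((j | j) | j) <;> simp [normalSchurForm, sub_eq_add_neg, add_comm]

variable [Fintype m] [Fintype n]

theorem normalSchurForm_mul_fromRows (c s : Matrix m m R) (d : Matrix n n R)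
    (X : Matrix m k R) (Y : Matrix n k R) (Z : Matrix m k R) :
    normalSchurForm c s d * fromRows (fromRows X Y) Z =
      fromRows (fromRows (c * X - s * Z) (d * Y)) (s * X + c * Z) := by
  ext ((i | i) | i) j <;> simp [normalSchurForm, mul_apply, Fintype.sum_sum_type, sub_eq_add_neg]

end Ring

theorem exists_eq_fromRows_zero_of_normalSchurForm_mul_eq_zero [CommRing R] [Fintype m]
    [DecidableEq m] [Fintype n] {t : Matrix m m R} (ht : IsUnit t)
    {W : Matrix ((m ⊕ n) ⊕ m) k R} (hW : normalSchurForm 0 t (0 : Matrix n n R) * W = 0) :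
    ∃ B : Matrix n k R, W = fromRows (fromRows 0 B) 0 := by
  have cancel : ∀ X : Matrix m k R, t * X = 0 → X = 0 := fun X h => by
    rw [← nonsing_inv_mul_cancel_left t X ((isUnit_iff_isUnit_det t).mp ht), h, Matrix.mul_zero]
  obtain ⟨X, Y, Z, rfl⟩ : ∃ X Y Z, W = fromRows (fromRows X Y) Z :=
    ⟨_, _, _, by rw [fromRows_toRows, fromRows_toRows]⟩
  rw [normalSchurForm_mul_fromRows, ← fromRows_zero, ← fromRows_zero] at hW
  simp only [fromRows_inj.eq_iff, Matrix.zero_mul, zero_sub, add_zero, neg_eq_zero] at hW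
  exact ⟨Y, by rw [cancel X hW.2, cancel Z hW.1.1]⟩

section Conjugation

variable [CommRing R] [Fintype n] [DecidableEq n] {Q T : Matrix n n R}

theorem sub_transpose_mul_eq_zero_of_conj (hQ : Qᵀ * Q = 1) {X : Matrix n k R}
    (h : (Q * T * Qᵀ - (Q * T * Qᵀ)ᵀ) * X = 0) : (T - Tᵀ) * (Qᵀ * X) = 0 := by
  have hconj : Q * T * Qᵀ - (Q * T * Qᵀ)ᵀ = Q * (T - Tᵀ) * Qᵀ := by
    simp only [transpose_mul, transpose_transpose, Matrix.mul_sub, Matrix.sub_mul,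
      Matrix.mul_assoc]
  calc (T - Tᵀ) * (Qᵀ * X) = Qᵀ * (Q * (T - Tᵀ) * Qᵀ * X) := by
        simp only [← Matrix.mul_assoc, hQ, Matrix.one_mul]
    _ = 0 := by rw [← hconj, h, Matrix.mul_zero]

theorem conj_mul_eq_mul_of_transpose_mul (hQ : Q * Qᵀ = 1) {X : Matrix n k R}
    {D : Matrix k k R} [Fintype k] (h : T * (Qᵀ * X) = Qᵀ * X * D) :
    Q * T * Qᵀ * X = X * D := by
  simp only [Matrix.mul_assoc]
  rw [h, ← Matrix.mul_assoc, ← Matrix.mul_assoc, hQ, Matrix.one_mul]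

end Conjugation

end Matrix

theorem real_eigvecs_from_skew_kernel_general {p r : ℕ}
    (lam theta : Fin p → ℝ) (breve : Fin r → ℝ)
    (hls : ∀ j, lam j * Real.sin (theta j) ≠ 0)
    (Q : Matrix ((Fin p ⊕ Fin r) ⊕ Fin p) ((Fin p ⊕ Fin r) ⊕ Fin p) ℝ)
    (hQ₁ : Qᵀ * Q = 1)
    (A : Matrix ((Fin p ⊕ Fin r) ⊕ Fin p) ((Fin p ⊕ Fin r) ⊕ Fin p) ℝ)
    (hA : A =
      Q * fromBlocks
        (fromBlocks (diagonal fun j => lam j * Real.cos (theta j)) 0 0 (diagonal breve))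
        (fromRows (-(diagonal fun j => lam j * Real.sin (theta j))) 0)
        (fromCols (diagonal fun j => lam j * Real.sin (theta j)) 0)
        (diagonal fun j => lam j * Real.cos (theta j)) * Qᵀ)
    (V : Matrix ((Fin p ⊕ Fin r) ⊕ Fin p) (Fin r) ℝ)
    (hV : Vᵀ * V = 1)
    (hskew : ((1/2 : ℝ) • (A - Aᵀ)) * V = 0) :
    ∃ R : Matrix (Fin r) (Fin r) ℝ,
      Rᵀ * R = 1 ∧ R * Rᵀ = 1 ∧ A * (V * R) = (V * R) * diagonal breve := by
  set s : Matrix (Fin p) (Fin p) ℝ := diagonal fun j => lam j * Real.sin (theta j)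
  set S := normalSchurForm (diagonal fun j => lam j * Real.cos (theta j)) s (diagonal breve)
  have hAS : A = Q * S * Qᵀ := hA
  have hQ₂ : Q * Qᵀ = 1 := mul_eq_one_comm.mp hQ₁
  have hskewS : normalSchurForm 0 (s + sᵀ) (0 : Matrix (Fin r) (Fin r) ℝ) * (Qᵀ * V) = 0 := by
    have hAV : (A - Aᵀ) * V = 0 := by
      rw [Matrix.smul_mul] at hskew
      exact (smul_eq_zero.mp hskew).resolve_left (by norm_num)
    rw [hAS] at hAV
    simpa only [S, normalSchurForm_sub_transpose, diagonal_transpose, sub_self] using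
      sub_transpose_mul_eq_zero_of_conj hQ₁ hAV
  have hs : IsUnit (s + sᵀ) := by
    simp [s, isUnit_diagonal, Pi.isUnit_iff, hls]
  obtain ⟨B, hW⟩ := exists_eq_fromRows_zero_of_normalSchurForm_mul_eq_zero hs hskewS
  have hB : Bᵀ * B = 1 := by
    have hW_orth : (Qᵀ * V)ᵀ * (Qᵀ * V) = 1 := by
      rw [transpose_mul, transpose_transpose, Matrix.mul_assoc, ← Matrix.mul_assoc Q, hQ₂,
        Matrix.one_mul, hV]
    simpa [hW, transpose_fromRows, fromCols_mul_fromRows] using hW_orth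
  have hB' : B * Bᵀ = 1 := mul_eq_one_comm.mp hB
  refine ⟨Bᵀ, by rwa [transpose_transpose], by rwa [transpose_transpose], ?_⟩
  rw [hAS]
  apply conj_mul_eq_mul_of_transpose_mul hQ₂
  rw [← Matrix.mul_assoc Qᵀ, hW]
  simp [fromRows_mul, hB', S, normalSchurForm_mul_fromRows]

theorem real_eigvecs_from_skew_kernel {p r : ℕ}
    (lam theta : Fin p → ℝ) (breve : Fin r → ℝ)
    (hls : ∀ j, lam j * Real.sin (theta j) ≠ 0)
    (Q : Matrix ((Fin p ⊕ Fin r) ⊕ Fin p) ((Fin p ⊕ Fin r) ⊕ Fin p) ℝ)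
    (hQ₁ : Qᵀ * Q = 1) (hQ₂ : Q * Qᵀ = 1)
    (A : Matrix ((Fin p ⊕ Fin r) ⊕ Fin p) ((Fin p ⊕ Fin r) ⊕ Fin p) ℝ)
    (hA : A =
      Q * fromBlocks
        (fromBlocks (diagonal fun j => lam j * Real.cos (theta j)) 0 0 (diagonal breve))
        (fromRows (-(diagonal fun j => lam j * Real.sin (theta j))) 0)
        (fromCols (diagonal fun j => lam j * Real.sin (theta j)) 0)
        (diagonal fun j => lam j * Real.cos (theta j)) * Qᵀ)
    (V : Matrix ((Fin p ⊕ Fin r) ⊕ Fin p) (Fin r) ℝ)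
    (hV : Vᵀ * V = 1)
    (hskew : ((1/2 : ℝ) • (A - Aᵀ)) * V = 0) :
    ∃ R : Matrix (Fin r) (Fin r) ℝ,
      Rᵀ * R = 1 ∧ R * Rᵀ = 1 ∧ A * (V * R) = (V * R) * diagonal breve :=
  real_eigvecs_from_skew_kernel_general lam theta breve hls Q hQ₁ A hA V hV hskew
end

section
/- Let A ∈ ℝ^{n×n} be normal with r > 0 real eigenvalues (counted in a real Schur decomposition where Λ sin Θ has nonzero diagonal entries). For every V ∈ ℝ^{n×r} with orthonormal columns satisfying skew(A) V = 0, the matrix H := Vᵀ A V is symmetric and A V = V H. -/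
/-!
Since `A V = Aᵀ V`, the matrix `Vᵀ A V` is symmetric at once. For the invariance, pass to the
Schur form `S = Qᵀ A Q` and `W = Qᵀ V`: then `(S - Sᵀ) W = 0`, and off the middle block
`S - Sᵀ` acts as `± 2 Λ sin Θ`, which is invertible. So `W` is supported on the middle block,
where it is a square matrix `B` with orthonormal columns, hence orthogonal. The middle block is
`S`-invariant (`S` acts there as `Λ̆`), and `B Bᵀ = 1` turns `S W = W (Bᵀ Λ̆ B)` into
`S W = W (Wᵀ S W)`.
-/

namespace Matrix

variable {K : Type*} {n m : Type*} [DecidableEq n]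

section CommRing

variable [CommRing K]

/-- In the notation of the paper, `c = Λ cos Θ`, `d = Λ sin Θ` and `e = Λ̆`. -/
def realSchurForm (c : Matrix n n K) (d : n → K) (e : Matrix m m K) :
    Matrix ((n ⊕ m) ⊕ n) ((n ⊕ m) ⊕ n) K :=
  fromBlocks (fromBlocks c 0 0 e) (fromRows (-diagonal d) 0) (fromCols (diagonal d) 0) c

lemma transpose_realSchurForm (c : Matrix n n K) (d : n → K) (e : Matrix m m K) :
    (realSchurForm c d e)ᵀ = realSchurForm cᵀ (-d) eᵀ := by
  simp only [realSchurForm, fromBlocks_transpose, transpose_fromRows, transpose_fromCols,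
    diagonal_transpose, transpose_zero, diagonal_neg, Pi.neg_apply, neg_neg]
  rfl

variable [Fintype n] [Fintype m]

lemma realSchurForm_mul_fromRows {k : Type*} (c : Matrix n n K) (d : n → K) (e : Matrix m m K)
    (X₁ : Matrix n k K) (X₂ : Matrix m k K) (X₃ : Matrix n k K) :
    realSchurForm c d e * fromRows (fromRows X₁ X₂) X₃ =
      fromRows (fromRows (c * X₁ - diagonal d * X₃) (e * X₂)) (diagonal d * X₁ + c * X₃) := by
  ext ((i | i) | i) j <;>
    simp [realSchurForm, fromBlocks_mul_fromRows, fromCols_mul_fromRows, sub_eq_add_neg]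

end CommRing

lemma eq_zero_of_diagonal_neg_mul_eq [Fintype n] [Field K] [NeZero (2 : K)] {k : Type*}
    {d : n → K} (hd : ∀ i, d i ≠ 0) {X : Matrix n k K} (h : diagonal (-d) * X = diagonal d * X) :
    X = 0 := by
  ext i j
  have hij : (2 * d i) * X i j = 0 := by
    linear_combination -(by simpa [diagonal_mul] using congrFun₂ h i j : -d i * X i j = d i * X i j)
  exact (mul_eq_zero.1 hij).resolve_left (mul_ne_zero two_ne_zero (hd i))

-- Off the middle block, `S - Sᵀ` is `± 2 diagonal d`.
lemma exists_eq_fromRows_zero_of_transpose_realSchurForm_mul_eq [Fintype n] [Fintype m] [Field K]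
    [NeZero (2 : K)] {k : Type*} {c : Matrix n n K} (hc : cᵀ = c) {d : n → K} (hd : ∀ i, d i ≠ 0)
    (e : Matrix m m K) {X : Matrix ((n ⊕ m) ⊕ n) k K}
    (hX : (realSchurForm c d e)ᵀ * X = realSchurForm c d e * X) :
    ∃ B : Matrix m k K, X = fromRows (fromRows (0 : Matrix n k K) B) (0 : Matrix n k K) := by
  rw [← fromRows_toRows X, ← fromRows_toRows X.toRows₁] at hX ⊢
  rw [transpose_realSchurForm, realSchurForm_mul_fromRows, realSchurForm_mul_fromRows, hc,
    fromRows_ext_iff, fromRows_ext_iff] at hX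
  obtain ⟨⟨h₁, -⟩, h₃⟩ := hX
  rw [add_left_inj] at h₃
  rw [sub_right_inj] at h₁
  rw [eq_zero_of_diagonal_neg_mul_eq hd h₁, eq_zero_of_diagonal_neg_mul_eq hd h₃]
  exact ⟨_, rfl⟩

lemma realSchurForm_mul_middle [Fintype n] [Fintype m] [CommRing K] {k : Type*}
    (c : Matrix n n K) (d : n → K) (e : Matrix m m K) (B : Matrix m k K) :
    realSchurForm c d e * fromRows (fromRows (0 : Matrix n k K) B) (0 : Matrix n k K) =
      fromRows (fromRows 0 (e * B)) 0 := by
  rw [realSchurForm_mul_fromRows]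
  simp

lemma realSchurForm_mul_eq_mul_transpose_mul_mul [Fintype n] [Fintype m] [DecidableEq m]
    [Field K] [NeZero (2 : K)] {c : Matrix n n K} (hc : cᵀ = c) {d : n → K} (hd : ∀ i, d i ≠ 0)
    (e : Matrix m m K) {X : Matrix ((n ⊕ m) ⊕ n) m K} (hXX : Xᵀ * X = 1)
    (hX : (realSchurForm c d e)ᵀ * X = realSchurForm c d e * X) :
    realSchurForm c d e * X = X * (Xᵀ * realSchurForm c d e * X) := by
  obtain ⟨B, rfl⟩ := exists_eq_fromRows_zero_of_transpose_realSchurForm_mul_eq hc hd e hX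
  have hB : B * Bᵀ = 1 :=
    mul_eq_one_comm.1 (by simpa [transpose_fromRows, fromCols_mul_fromRows] using hXX)
  rw [Matrix.mul_assoc, realSchurForm_mul_middle]
  simp [transpose_fromRows, fromCols_mul_fromRows, ← Matrix.mul_assoc, hB]

section OrthogonalConj

variable {ι κ R : Type*} [Fintype ι] [CommRing R] {Q : Matrix ι ι R}

lemma isSymm_transpose_mul_mul_of_transpose_mul_eq {A : Matrix ι ι R} {V : Matrix ι κ R}
    (h : Aᵀ * V = A * V) : (Vᵀ * A * V).IsSymm := by
  rw [IsSymm, transpose_mul, transpose_mul, transpose_transpose, Matrix.mul_assoc, h]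

lemma transpose_mul_eq_mul_of_conj [DecidableEq ι] (hQ : Qᵀ * Q = 1) {S : Matrix ι ι R}
    {V : Matrix ι κ R} (h : (Q * S * Qᵀ)ᵀ * V = Q * S * Qᵀ * V) : Sᵀ * (Qᵀ * V) = S * (Qᵀ * V) := by
  have := congrArg (Qᵀ * ·) h
  simp only [transpose_mul, transpose_transpose, ← Matrix.mul_assoc, hQ, Matrix.one_mul] at this
  simpa only [Matrix.mul_assoc] using this

lemma mul_eq_mul_transpose_mul_mul_of_conj [DecidableEq ι] [Fintype κ] (hQ : Q * Qᵀ = 1)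
    {S : Matrix ι ι R} {V : Matrix ι κ R} (h : S * (Qᵀ * V) = Qᵀ * V * ((Qᵀ * V)ᵀ * S * (Qᵀ * V))) :
    Q * S * Qᵀ * V = V * (Vᵀ * (Q * S * Qᵀ) * V) := by
  have hV : Q * (Qᵀ * V) = V := by rw [← Matrix.mul_assoc, hQ, Matrix.one_mul]
  calc Q * S * Qᵀ * V = Q * (S * (Qᵀ * V)) := by simp only [Matrix.mul_assoc]
    _ = V * ((Qᵀ * V)ᵀ * S * (Qᵀ * V)) := by rw [h, ← Matrix.mul_assoc, hV]
    _ = V * (Vᵀ * (Q * S * Qᵀ) * V) := by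
      simp only [transpose_mul, transpose_transpose, Matrix.mul_assoc]

end OrthogonalConj

end Matrix

open Matrix

theorem real_eigenblock_symmetric_general {p r : ℕ}
    (lam theta : Fin p → ℝ) (breve : Fin r → ℝ)
    (hls : ∀ j, lam j * Real.sin (theta j) ≠ 0)
    (Q : Matrix ((Fin p ⊕ Fin r) ⊕ Fin p) ((Fin p ⊕ Fin r) ⊕ Fin p) ℝ)
    (hQ₁ : Qᵀ * Q = 1) (hQ₂ : Q * Qᵀ = 1)
    (A : Matrix ((Fin p ⊕ Fin r) ⊕ Fin p) ((Fin p ⊕ Fin r) ⊕ Fin p) ℝ)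
    (hA : A =
      Q * fromBlocks
        (fromBlocks (diagonal fun j => lam j * Real.cos (theta j)) 0 0 (diagonal breve))
        (fromRows (-(diagonal fun j => lam j * Real.sin (theta j))) 0)
        (fromCols (diagonal fun j => lam j * Real.sin (theta j)) 0)
        (diagonal fun j => lam j * Real.cos (theta j)) * Qᵀ)
    (V : Matrix ((Fin p ⊕ Fin r) ⊕ Fin p) (Fin r) ℝ)
    (hV : Vᵀ * V = 1)
    (hskew : ((1/2 : ℝ) • (A - Aᵀ)) * V = 0) :
    (Vᵀ * A * V)ᵀ = Vᵀ * A * V ∧ A * V = V * (Vᵀ * A * V) := by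
  have hAV : Aᵀ * V = A * V := by
    rw [Matrix.smul_mul, smul_eq_zero, Matrix.sub_mul, sub_eq_zero] at hskew
    exact (hskew.resolve_left (by norm_num)).symm
  refine ⟨isSymm_transpose_mul_mul_of_transpose_mul_eq hAV, ?_⟩
  change A = Q * realSchurForm _ (fun j => lam j * Real.sin (theta j)) (diagonal breve) * Qᵀ at hA
  subst hA
  have hW : (Qᵀ * V)ᵀ * (Qᵀ * V) = 1 := by
    rw [transpose_mul, transpose_transpose, Matrix.mul_assoc, ← Matrix.mul_assoc Q, hQ₂,
      Matrix.one_mul, hV]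
  exact mul_eq_mul_transpose_mul_mul_of_conj hQ₂ <|
    realSchurForm_mul_eq_mul_transpose_mul_mul (diagonal_transpose _) hls _ hW <|
      transpose_mul_eq_mul_of_conj hQ₁ hAV

theorem real_eigenblock_symmetric {p r : ℕ} (hr : 0 < r)
    (lam theta : Fin p → ℝ) (breve : Fin r → ℝ)
    (hls : ∀ j, lam j * Real.sin (theta j) ≠ 0)
    (Q : Matrix ((Fin p ⊕ Fin r) ⊕ Fin p) ((Fin p ⊕ Fin r) ⊕ Fin p) ℝ)
    (hQ₁ : Qᵀ * Q = 1) (hQ₂ : Q * Qᵀ = 1)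
    (A : Matrix ((Fin p ⊕ Fin r) ⊕ Fin p) ((Fin p ⊕ Fin r) ⊕ Fin p) ℝ)
    (hA : A =
      Q * fromBlocks
        (fromBlocks (diagonal fun j => lam j * Real.cos (theta j)) 0 0 (diagonal breve))
        (fromRows (-(diagonal fun j => lam j * Real.sin (theta j))) 0)
        (fromCols (diagonal fun j => lam j * Real.sin (theta j)) 0)
        (diagonal fun j => lam j * Real.cos (theta j)) * Qᵀ)
    (V : Matrix ((Fin p ⊕ Fin r) ⊕ Fin p) (Fin r) ℝ)
    (hV : Vᵀ * V = 1)
    (hskew : ((1/2 : ℝ) • (A - Aᵀ)) * V = 0) :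
    (Vᵀ * A * V)ᵀ = Vᵀ * A * V ∧ A * V = V * (Vᵀ * A * V) :=
  real_eigenblock_symmetric_general lam theta breve hls Q hQ₁ hQ₂ A hA V hV hskew
end
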